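/- arXiv:2410.20827 — 2 statements merged into one kernel-verified Lean document; each statement's English description precedes it below -/
import Mathlib

section
/- The function f(γ) = ln(1+γ) - c·√(2γ/(1+γ)) is strictly increasing on the interval (γ̄, ∞), where γ̄ = (√(1+2c²) - 1)/2 and c > 0. -/
/-!
With `s = √(2γ/(1+γ))` the derivative is `f'(γ) = ((1+γ)s - c) / ((1+γ)²s)`, and
`((1+γ)s)² = 2γ(1+γ)`, which exceeds `c²` exactly when `(2γ+1)² > 1 + 2c²`, i.e. `γ > γ̄`.
-/

open Real Set

lemma hasDerivAt_sqrt_two_mul_div_one_add {x : ℝ} (hx : 0 < x) :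
    HasDerivAt (fun γ : ℝ => √(2 * γ / (1 + γ))) (((1 + x) ^ 2 * √(2 * x / (1 + x)))⁻¹) x := by
  have h1x : 1 + x ≠ 0 := by positivity
  have hquot : HasDerivAt (fun γ : ℝ => 2 * γ / (1 + γ)) (2 / (1 + x) ^ 2) x := by
    refine (((hasDerivAt_id' x).const_mul 2).div ((hasDerivAt_id' x).const_add 1) h1x
      ).congr_deriv ?_
    ring
  refine (hquot.sqrt (by positivity)).congr_deriv ?_
  field_simp

lemma hasDerivAt_log_one_add_sub_mul_sqrt (c : ℝ) {x : ℝ} (hx : 0 < x) :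
    HasDerivAt (fun γ : ℝ => log (1 + γ) - c * √(2 * γ / (1 + γ)))
      (((1 + x) * √(2 * x / (1 + x)) - c) / ((1 + x) ^ 2 * √(2 * x / (1 + x)))) x := by
  have hlog : HasDerivAt (fun γ : ℝ => log (1 + γ)) (1 + x)⁻¹ x := by
    simpa using ((hasDerivAt_id' x).const_add 1).log (by positivity)
  refine (hlog.sub ((hasDerivAt_sqrt_two_mul_div_one_add hx).const_mul c)).congr_deriv ?_
  field_simp

lemma sq_lt_two_mul_mul_one_add {c x : ℝ} (hx : (√(1 + 2 * c ^ 2) - 1) / 2 < x) :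
    c ^ 2 < 2 * x * (1 + x) := by
  have hsqrt : √(1 + 2 * c ^ 2) < 2 * x + 1 := by linarith
  have := (sqrt_lt' (by linarith [sqrt_nonneg (1 + 2 * c ^ 2)])).1 hsqrt
  nlinarith

lemma lt_one_add_mul_sqrt_two_mul_div_one_add {c x : ℝ} (hx : 0 < x)
    (h : c ^ 2 < 2 * x * (1 + x)) : c < (1 + x) * √(2 * x / (1 + x)) := by
  have hsq : ((1 + x) * √(2 * x / (1 + x))) ^ 2 = 2 * x * (1 + x) := by
    rw [mul_pow, sq_sqrt (by positivity)]
    field_simp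
  exact (abs_lt_of_sq_lt_sq' (hsq ▸ h) (by positivity)).2

theorem stmt_3_general (c : ℝ) :
    StrictMonoOn (fun γ : ℝ => Real.log (1 + γ) - c * Real.sqrt (2 * γ / (1 + γ)))
      (Set.Ioi ((Real.sqrt (1 + 2 * c ^ 2) - 1) / 2)) := by
  have hpos : ∀ x ∈ Ioi ((√(1 + 2 * c ^ 2) - 1) / 2), 0 < x := fun x hx =>
    (div_nonneg (sub_nonneg.2 (one_le_sqrt.2 (by nlinarith))) zero_le_two).trans_lt hx
  have hderiv := fun x hx => hasDerivAt_log_one_add_sub_mul_sqrt c (hpos x hx)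
  refine strictMonoOn_of_hasDerivWithinAt_pos (convex_Ioi _)
    (fun x hx => (hderiv x hx).continuousAt.continuousWithinAt)
    (fun x hx => (hderiv x (interior_subset hx)).hasDerivWithinAt) fun x hx => ?_
  rw [interior_Ioi] at hx
  have hx0 := hpos x hx
  exact div_pos
    (sub_pos.2 (lt_one_add_mul_sqrt_two_mul_div_one_add hx0 (sq_lt_two_mul_mul_one_add hx)))
    (by positivity)

/-- For `c > 0`, the function `f(γ) = ln(1+γ) - c·√(2γ/(1+γ))` is strictly increasing on
the interval `(γ̄, ∞)` with `γ̄ = (√(1+2c²) - 1)/2`. -/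
theorem stmt_3 (c : ℝ) (hc : 0 < c) :
    StrictMonoOn (fun γ : ℝ => Real.log (1 + γ) - c * Real.sqrt (2 * γ / (1 + γ)))
      (Set.Ioi ((Real.sqrt (1 + 2 * c ^ 2) - 1) / 2)) :=
  stmt_3_general c
end

section
/- Monotone Pareto-boundary correspondence with inverse: if f : S → ℝ is strictly increasing and continuous on an interval S, then the inverse map f⁻¹ exists on f(S), is strictly increasing, and for any compact SINR region A ⊆ Sᴷ, the Pareto boundary of the rate region f(A) (componentwise image) equals the componentwise image under f of the Pareto boundary of A. -/
/-- `x` is Pareto-optimal in `X` (componentwise order): there is no `y ∈ X` dominating `x`. -/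
def ParetoOpt {K : ℕ} (X : Set (Fin K → ℝ)) (x : Fin K → ℝ) : Prop :=
  x ∈ X ∧ ¬∃ y ∈ X, (∀ i, x i ≤ y i) ∧ y ≠ x

/-- If `f` is strictly increasing and continuous on an interval `S`, then `f` has a strictly
increasing inverse on `f(S)`, and for any nonempty compact SINR region `A ⊆ Sᴷ`, the Pareto
boundary of the rate region (componentwise image of `A` under `f`) equals the componentwise
image under `f` of the Pareto boundary of `A`. -/
theorem stmt_15 {K : ℕ} (hK : 0 < K) (S : Set ℝ) (hS : S.OrdConnected)
    (f : ℝ → ℝ) (hf : StrictMonoOn f S) (hfc : ContinuousOn f S)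
    (A : Set (Fin K → ℝ)) (hAc : IsCompact A) (hne : A.Nonempty)
    (hAS : ∀ a ∈ A, ∀ i, a i ∈ S) :
    (∃ g : ℝ → ℝ, StrictMonoOn g (f '' S) ∧ ∀ x ∈ S, g (f x) = x) ∧
      {r : Fin K → ℝ |
          ParetoOpt ((fun a : Fin K → ℝ => fun i => f (a i)) '' A) r} =
        (fun a : Fin K → ℝ => fun i => f (a i)) '' {a : Fin K → ℝ | ParetoOpt A a} := by
  have hinj : Set.InjOn f S := hf.injOn
  constructor
  · refine ⟨Function.invFunOn f S, ?_, fun x hx => hinj.leftInvOn_invFunOn hx⟩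
    rintro y1 ⟨x1, hx1, rfl⟩ y2 ⟨x2, hx2, rfl⟩ hlt
    rw [hinj.leftInvOn_invFunOn hx1, hinj.leftInvOn_invFunOn hx2]
    by_contra h
    push_neg at h
    exact absurd ((hf.le_iff_le hx2 hx1).mpr h) (not_le.mpr hlt)
  · ext r
    simp only [Set.mem_setOf_eq, Set.mem_image]
    constructor
    · rintro ⟨⟨a, ha, rfl⟩, hno⟩
      refine ⟨a, ⟨ha, ?_⟩, rfl⟩
      rintro ⟨b, hb, hle, hne'⟩
      refine hno ⟨fun i => f (b i), ⟨b, hb, rfl⟩, fun i =>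
        (hf.le_iff_le (hAS a ha i) (hAS b hb i)).mpr (hle i), ?_⟩
      intro heq
      apply hne'
      funext i
      exact hinj (hAS b hb i) (hAS a ha i) (congrFun heq i)
    · rintro ⟨a, ⟨ha, hno⟩, rfl⟩
      refine ⟨⟨a, ha, rfl⟩, ?_⟩
      rintro ⟨y, ⟨b, hb, rfl⟩, hle, hne'⟩
      refine hno ⟨b, hb, fun i =>
        (hf.le_iff_le (hAS a ha i) (hAS b hb i)).mp (hle i), ?_⟩
      intro heq
      exact hne' (by rw [heq])
end
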